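/- Let T°_M(H,G) be the truncation of T(H,G) to tuples s such that for every nonempty A ⊆ s̄, t_H(A)^2 ≤ M p^{2|A| - 2|V(H)|} Var[T(H,G)]. Then P(T(H,G) ≠ T°_M(H,G)) ≤ (2^{|V(H)|} - 1)/(M(1-p)). -/
import Mathlib


open Finset

noncomputable section

/-- `M_H(s) = ∏_{(i,j)∈E(H)} a_{s_i s_j}`: indicator that the tuple `s` of distinct
vertices maps every edge of `H` to an edge of `G`. -/
def MH {k : ℕ} {V : Type*} (H : SimpleGraph (Fin k)) [DecidableRel H.Adj]
    (G : SimpleGraph V) [DecidableRel G.Adj] (s : Fin k ↪ V) : ℝ :=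
  ∏ i : Fin k, ∏ j : Fin k,
    if H.Adj i j then (if G.Adj (s i) (s j) then 1 else 0) else 1

/-- `N(H,G) = |Aut(H)|⁻¹ ∑_s M_H(s)`: the number of copies of `H` in `G`. -/
def NHG {k : ℕ} {V : Type*} [Fintype V] [DecidableEq V] (H : SimpleGraph (Fin k))
    [DecidableRel H.Adj] (G : SimpleGraph V) [DecidableRel G.Adj] : ℝ :=
  (Nat.card (H ≃g H) : ℝ)⁻¹ * ∑ s : Fin k ↪ V, MH H G s

/-- `t_H(A)`: the number of copies of `H` in `G` whose vertex set contains `A`. -/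
def tH {k : ℕ} {V : Type*} [Fintype V] [DecidableEq V] (H : SimpleGraph (Fin k))
    [DecidableRel H.Adj] (G : SimpleGraph V) [DecidableRel G.Adj] (A : Finset V) : ℝ :=
  (Nat.card (H ≃g H) : ℝ)⁻¹ *
    ∑ s ∈ Finset.univ.filter (fun s : Fin k ↪ V => A ⊆ Finset.univ.map s), MH H G s

/-- Probability weight of a sampling outcome `ω : V → Bool` when each vertex is retained
independently with probability `p`. -/
def wt {V : Type*} [Fintype V] (p : ℝ) (ω : V → Bool) : ℝ :=
  ∏ v : V, if ω v then p else 1 - p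

/-- Expectation under the subgraph sampling model with sampling ratio `p`. -/
def expec {V : Type*} [Fintype V] [DecidableEq V] (p : ℝ) (f : (V → Bool) → ℝ) : ℝ :=
  ∑ ω : V → Bool, wt p ω * f ω

/-- `X_s = ∏_{u ∈ s̄} X_u`: indicator that all entries of the tuple `s` are sampled. -/
def Xs {k : ℕ} {V : Type*} (s : Fin k ↪ V) (ω : V → Bool) : ℝ :=
  ∏ u ∈ Finset.univ.map s, if ω u then 1 else 0

/-- `T(H,G) = |Aut(H)|⁻¹ ∑_s M_H(s) X_s`: the number of copies of `H` spanned by the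
sampled vertices. -/
def TH {k : ℕ} {V : Type*} [Fintype V] [DecidableEq V] (H : SimpleGraph (Fin k))
    [DecidableRel H.Adj] (G : SimpleGraph V) [DecidableRel G.Adj] (ω : V → Bool) : ℝ :=
  (Nat.card (H ≃g H) : ℝ)⁻¹ * ∑ s : Fin k ↪ V, MH H G s * Xs s ω

open scoped Classical

/-- `Var[T(H,G)]` under sampling ratio `p`. -/
def varT {k : ℕ} {V : Type*} [Fintype V] [DecidableEq V] (H : SimpleGraph (Fin k))
    [DecidableRel H.Adj] (G : SimpleGraph V) [DecidableRel G.Adj] (p : ℝ) : ℝ :=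
  expec p (fun ω => (TH H G ω - expec p (TH H G)) ^ 2)

/-- The event `𝓒_M(s)`: for every nonempty `A ⊆ s̄`,
`t_H(A)² ≤ M p^{2|A| - 2|V(H)|} Var[T(H,G)]`. -/
def CMev {k : ℕ} {V : Type*} [Fintype V] [DecidableEq V] (H : SimpleGraph (Fin k))
    [DecidableRel H.Adj] (G : SimpleGraph V) [DecidableRel G.Adj] (M p : ℝ)
    (s : Fin k ↪ V) : Prop :=
  ∀ A : Finset V, A ⊆ Finset.univ.map s → A.Nonempty →
    tH H G A ^ 2 ≤ M * (p ^ (2 * A.card) / p ^ (2 * k)) * varT H G p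

/-- The truncated statistic `T°_M(H,G) = |Aut(H)|⁻¹ ∑_{s : 𝓒_M(s)} M_H(s) X_s`. -/
def Tcirc {k : ℕ} {V : Type*} [Fintype V] [DecidableEq V] (H : SimpleGraph (Fin k))
    [DecidableRel H.Adj] (G : SimpleGraph V) [DecidableRel G.Adj] (M p : ℝ)
    (ω : V → Bool) : ℝ :=
  (Nat.card (H ≃g H) : ℝ)⁻¹ *
    ∑ s ∈ Finset.univ.filter (fun s : Fin k ↪ V => CMev H G M p s), MH H G s * Xs s ω

section Helpers

variable {k : ℕ} {V : Type*} [Fintype V] [DecidableEq V]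

lemma wt_nonneg {p : ℝ} (hp0 : 0 ≤ p) (hp1 : p ≤ 1) (ω : V → Bool) : 0 ≤ wt p ω :=
  Finset.prod_nonneg fun v _ => by split_ifs <;> linarith

lemma sum_wt_prod (p : ℝ) (A : Finset V) :
    ∑ ω : V → Bool, wt p ω * ∏ u ∈ A, (if ω u then (1:ℝ) else 0) = p ^ A.card := by
  have h1 : ∀ ω : V → Bool, wt p ω * ∏ u ∈ A, (if ω u then (1:ℝ) else 0)
      = ∏ v : V, ((if ω v then p else 1 - p) *
          (if v ∈ A then (if ω v then (1:ℝ) else 0) else 1)) := by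
    intro ω
    rw [Finset.prod_mul_distrib, wt]
    congr 1
    rw [Finset.prod_ite_mem, Finset.univ_inter]
  simp only [h1]
  rw [show (Finset.univ : Finset (V → Bool))
      = Fintype.piFinset fun _ : V => (Finset.univ : Finset Bool) from (Fintype.piFinset_univ).symm]
  rw [show (∑ x ∈ Fintype.piFinset fun _ : V => (Finset.univ : Finset Bool),
        ∏ v : V, ((if x v then p else 1 - p) *
          (if v ∈ A then (if x v then (1:ℝ) else 0) else 1)))
      = ∏ v : V, ∑ b ∈ (Finset.univ : Finset Bool), ((if b then p else 1 - p) *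
          (if v ∈ A then (if b then (1:ℝ) else 0) else 1)) from
    Finset.sum_prod_piFinset (Finset.univ : Finset Bool)
      (fun v b => (if b then p else 1 - p) * (if v ∈ A then (if b then (1:ℝ) else 0) else 1))]
  have h2 : ∀ v : V, (∑ b ∈ (Finset.univ : Finset Bool), ((if b then p else 1 - p) *
      (if v ∈ A then (if b then (1:ℝ) else 0) else 1))) = if v ∈ A then p else 1 := by
    intro v
    rw [Fintype.sum_bool]
    by_cases h : v ∈ A <;> simp [h] <;> ring_nf
  rw [Finset.prod_congr rfl fun v _ => h2 v, Finset.prod_ite_mem, Finset.univ_inter,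
    Finset.prod_const]

lemma sum_wt (p : ℝ) : ∑ ω : V → Bool, wt p ω = 1 := by
  have := sum_wt_prod (V := V) p ∅
  simpa using this

lemma Xs_eq {k : ℕ} (s : Fin k ↪ V) (ω : V → Bool) :
    Xs s ω = if (∀ u ∈ Finset.univ.map s, ω u = true) then (1:ℝ) else 0 := by
  rw [Xs, Finset.prod_boole]
  congr

lemma card_sbar {k : ℕ} (s : Fin k ↪ V) : (Finset.univ.map s).card = k := by
  rw [Finset.card_map, Finset.card_univ, Fintype.card_fin]

lemma expec_Xs {k : ℕ} (p : ℝ) (s : Fin k ↪ V) : expec p (fun ω => Xs s ω) = p ^ k := by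
  rw [expec]
  have := sum_wt_prod p (Finset.univ.map s)
  rw [card_sbar] at this
  simpa [Xs] using this

lemma expec_Xs_mul {k : ℕ} (p : ℝ) (s s' : Fin k ↪ V) :
    expec p (fun ω => Xs s ω * Xs s' ω)
      = p ^ (Finset.univ.map s ∪ Finset.univ.map s').card := by
  have h : ∀ ω : V → Bool, Xs s ω * Xs s' ω
      = ∏ u ∈ Finset.univ.map s ∪ Finset.univ.map s', if ω u then (1:ℝ) else 0 := by
    intro ω
    rw [Xs_eq, Xs_eq, Finset.prod_boole]
    have huni : (∀ u ∈ Finset.univ.map s ∪ Finset.univ.map s', ω u = true) ↔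
        (∀ u ∈ Finset.univ.map s, ω u = true) ∧ (∀ u ∈ Finset.univ.map s', ω u = true) := by
      simp [Finset.mem_union, or_imp, forall_and]
    by_cases h1 : ∀ u ∈ Finset.univ.map s, ω u = true
    · by_cases h2 : ∀ u ∈ Finset.univ.map s', ω u = true
      · rw [if_pos h1, if_pos h2, if_pos (huni.mpr ⟨h1, h2⟩)]
        norm_num
      · rw [if_pos h1, if_neg h2, if_neg (fun h => h2 (huni.mp h).2)]
        norm_num
    · rw [if_neg h1, if_neg (fun h => h1 (huni.mp h).1), zero_mul]
  simp only [expec, h]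
  exact sum_wt_prod p _

lemma expec_const_mul (p a : ℝ) (f : (V → Bool) → ℝ) :
    expec p (fun ω => a * f ω) = a * expec p f := by
  unfold expec
  rw [Finset.mul_sum]
  exact Finset.sum_congr rfl fun ω _ => by ring

lemma expec_sum_mul {ι : Type*} (p : ℝ) (t : Finset ι) (g : ι → ℝ) (f : ι → (V → Bool) → ℝ) :
    expec p (fun ω => ∑ i ∈ t, g i * f i ω) = ∑ i ∈ t, g i * expec p (f i) := by
  unfold expec
  simp only [Finset.mul_sum]
  rw [Finset.sum_comm]
  refine Finset.sum_congr rfl fun i _ => ?_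
  exact Finset.sum_congr rfl fun ω _ => by ring

lemma expec_sum2_mul {ι κ' : Type*} (p : ℝ) (t : Finset ι) (u : Finset κ')
    (g : ι → κ' → ℝ) (f : ι → κ' → (V → Bool) → ℝ) :
    expec p (fun ω => ∑ i ∈ t, ∑ j ∈ u, g i j * f i j ω)
      = ∑ i ∈ t, ∑ j ∈ u, g i j * expec p (f i j) := by
  unfold expec
  simp only [Finset.mul_sum]
  rw [Finset.sum_comm]
  refine Finset.sum_congr rfl fun i _ => ?_
  rw [Finset.sum_comm]
  refine Finset.sum_congr rfl fun j _ => ?_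
  exact Finset.sum_congr rfl fun ω _ => by ring

variable (H : SimpleGraph (Fin k)) [DecidableRel H.Adj] (G : SimpleGraph V) [DecidableRel G.Adj]

lemma MH_nonneg (s : Fin k ↪ V) : 0 ≤ MH H G s :=
  Finset.prod_nonneg fun i _ => Finset.prod_nonneg fun j _ => by
    split_ifs <;> norm_num

lemma expec_TH (p : ℝ) :
    expec p (TH H G) = (Nat.card (H ≃g H) : ℝ)⁻¹ * ∑ s : Fin k ↪ V, MH H G s * p ^ k := by
  have h : TH H G = fun ω => (Nat.card (H ≃g H) : ℝ)⁻¹ * ∑ s : Fin k ↪ V, MH H G s * Xs s ω := rfl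
  rw [h, expec_const_mul]
  congr 1
  rw [expec_sum_mul]
  exact Finset.sum_congr rfl fun s _ => by rw [expec_Xs]

lemma varT_eq (p : ℝ) :
    varT H G p = ((Nat.card (H ≃g H) : ℝ)⁻¹) ^ 2 * ∑ s : Fin k ↪ V, ∑ s' : Fin k ↪ V,
      MH H G s * MH H G s' *
        (p ^ (Finset.univ.map s ∪ Finset.univ.map s').card - p ^ (2 * k)) := by
  classical
  set c : ℝ := (Nat.card (H ≃g H) : ℝ)⁻¹ with hc
  set μ : ℝ := expec p (TH H G) with hμ
  have hvar : varT H G p = expec p (fun ω => TH H G ω ^ 2) - μ ^ 2 := by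
    rw [varT, ← hμ]
    unfold expec
    rw [Finset.sum_congr rfl fun ω (_ : ω ∈ Finset.univ) => show
        wt p ω * (TH H G ω - μ) ^ 2
        = wt p ω * TH H G ω ^ 2 - 2 * μ * (wt p ω * TH H G ω) + μ ^ 2 * wt p ω by ring]
    rw [Finset.sum_add_distrib, Finset.sum_sub_distrib, ← Finset.mul_sum, ← Finset.mul_sum]
    have h2 : (∑ ω : V → Bool, wt p ω * TH H G ω) = μ := rfl
    rw [h2, sum_wt]
    ring
  have hT2 : expec p (fun ω => TH H G ω ^ 2) = c ^ 2 * ∑ s : Fin k ↪ V, ∑ s' : Fin k ↪ V,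
      MH H G s * MH H G s' * p ^ (Finset.univ.map s ∪ Finset.univ.map s').card := by
    have h3 : (fun ω => TH H G ω ^ 2)
        = fun ω => c ^ 2 * ∑ s : Fin k ↪ V, ∑ s' : Fin k ↪ V,
            (MH H G s * MH H G s') * ((fun ω' => Xs s ω' * Xs s' ω') ω) := by
      funext ω
      rw [TH, ← hc, mul_pow]
      congr 1
      rw [pow_two, Finset.sum_mul_sum]
      exact Finset.sum_congr rfl fun s _ => Finset.sum_congr rfl fun s' _ => by dsimp only; ring
    rw [h3, expec_const_mul, expec_sum2_mul]
    congr 1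
    refine Finset.sum_congr rfl fun s _ => Finset.sum_congr rfl fun s' _ => ?_
    rw [expec_Xs_mul]
  have hμ2 : μ ^ 2 = c ^ 2 * ∑ s : Fin k ↪ V, ∑ s' : Fin k ↪ V,
      MH H G s * MH H G s' * p ^ (2 * k) := by
    rw [hμ, expec_TH, ← hc, mul_pow]
    congr 1
    rw [pow_two, Finset.sum_mul_sum]
    refine Finset.sum_congr rfl fun s _ => Finset.sum_congr rfl fun s' _ => ?_
    rw [two_mul, pow_add]
    ring
  rw [hvar, hT2, hμ2, ← mul_sub, ← Finset.sum_sub_distrib]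
  congr 1
  refine Finset.sum_congr rfl fun s _ => ?_
  rw [← Finset.sum_sub_distrib]
  exact Finset.sum_congr rfl fun s' _ => by ring

lemma varT_nonneg {p : ℝ} (hp0 : 0 ≤ p) (hp1 : p ≤ 1) : 0 ≤ varT H G p :=
  Finset.sum_nonneg fun ω _ => mul_nonneg (wt_nonneg hp0 hp1 ω) (sq_nonneg _)

/-- The core single-pair inequality. -/
lemma core_pair {p : ℝ} (hp0 : 0 < p) (hp1 : p < 1) (C D : Finset V)
    (hCk : C.card ≤ k) (hD : D.card + C.card = 2 * k) :
    ∑ A ∈ C.powerset.filter (fun A => A.Nonempty), p ^ (2 * k) / p ^ A.card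
      ≤ ((2:ℝ) ^ k - 1) / (1 - p) * (p ^ D.card - p ^ (2 * k)) := by
  classical
  rcases C.eq_empty_or_nonempty with hC | hC
  · subst hC
    have h1 : Finset.filter (fun A => A.Nonempty) (Finset.powerset (∅ : Finset V)) = ∅ := by
      ext A
      simp [Finset.nonempty_iff_ne_empty]
    have h2 : D.card = 2 * k := by simpa using hD
    rw [h1, h2]
    simp
  · have hpc : (0:ℝ) < p ^ C.card := pow_pos hp0 _
    have hcard1 : 1 ≤ C.card := Finset.card_pos.mpr hC
    have hfil : C.powerset.filter (fun A => A.Nonempty) = C.powerset.erase ∅ := by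
      ext A
      simp [Finset.nonempty_iff_ne_empty, and_comm]
    have hcards : (C.powerset.filter (fun A => A.Nonempty)).card = 2 ^ C.card - 1 := by
      rw [hfil, Finset.card_erase_of_mem (Finset.empty_mem_powerset C), Finset.card_powerset]
    -- bound each term
    have hterm : ∀ A ∈ C.powerset.filter (fun A => A.Nonempty),
        p ^ (2 * k) / p ^ A.card ≤ p ^ (2 * k) / p ^ C.card := by
      intro A hA
      have hAC : A ⊆ C := Finset.mem_powerset.mp (Finset.mem_filter.mp hA).1
      have : p ^ C.card ≤ p ^ A.card :=
        pow_le_pow_of_le_one hp0.le hp1.le (Finset.card_le_card hAC)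
      exact div_le_div_of_nonneg_left (by positivity) (pow_pos hp0 _) this
    have hsum : ∑ A ∈ C.powerset.filter (fun A => A.Nonempty), p ^ (2 * k) / p ^ A.card
        ≤ ((2 ^ C.card - 1 : ℕ) : ℝ) * (p ^ (2 * k) / p ^ C.card) := by
      have := Finset.sum_le_card_nsmul (C.powerset.filter (fun A => A.Nonempty)) _
        (p ^ (2 * k) / p ^ C.card) hterm
      rwa [hcards, nsmul_eq_mul] at this
    refine hsum.trans ?_
    have hcast : ((2 ^ C.card - 1 : ℕ) : ℝ) = 2 ^ C.card - 1 := by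
      have : (1:ℕ) ≤ 2 ^ C.card := Nat.one_le_two_pow
      push_cast [this]
      ring
    rw [hcast]
    have h2le : (2:ℝ) ^ C.card - 1 ≤ 2 ^ k - 1 := by
      have : (2:ℝ) ^ C.card ≤ 2 ^ k := pow_le_pow_right₀ one_le_two hCk
      linarith
    have hX : (0:ℝ) < p ^ (2 * k) / p ^ C.card := by positivity
    have step1 : ((2:ℝ) ^ C.card - 1) * (p ^ (2 * k) / p ^ C.card)
        ≤ ((2:ℝ) ^ k - 1) * (p ^ (2 * k) / p ^ C.card) := by
      apply mul_le_mul_of_nonneg_right h2le hX.le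
    refine step1.trans ?_
    -- p^D.card = p^{2k}/p^{|C|}
    have hDpow : p ^ D.card = p ^ (2 * k) / p ^ C.card := by
      rw [eq_div_iff hpc.ne', ← pow_add, hD]
    have hpC_le_p : p ^ C.card ≤ p := by
      calc p ^ C.card ≤ p ^ 1 := pow_le_pow_of_le_one hp0.le hp1.le hcard1
      _ = p := pow_one p
    -- key: (1-p) * X ≤ X - p^{2k}  where X = p^{2k}/p^{|C|}
    have hkey : (1 - p) * (p ^ (2 * k) / p ^ C.card) ≤ p ^ D.card - p ^ (2 * k) := by
      rw [hDpow]
      have : p * (p ^ (2 * k) / p ^ C.card) ≥ p ^ (2 * k) := by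
        rw [ge_iff_le, ← sub_nonneg, mul_div_assoc']
        have h1 : p ^ (2*k) ≤ p * p ^ (2 * k) / p ^ C.card := by
          rw [le_div_iff₀ hpc]
          calc p ^ (2*k) * p ^ C.card ≤ p ^ (2*k) * p :=
            mul_le_mul_of_nonneg_left hpC_le_p (by positivity)
          _ = p * p ^ (2*k) := by ring
        linarith
      have hexp : (1 - p) * (p ^ (2 * k) / p ^ C.card)
          = p ^ (2 * k) / p ^ C.card - p * (p ^ (2 * k) / p ^ C.card) := by ring
      rw [hexp]
      linarith
    have h2k1 : (0:ℝ) ≤ (2:ℝ) ^ k - 1 := by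
      have : (1:ℝ) ≤ 2 ^ k := one_le_pow₀ one_le_two
      linarith
    have h1p : (0:ℝ) < 1 - p := by linarith
    calc ((2:ℝ) ^ k - 1) * (p ^ (2 * k) / p ^ C.card)
        = ((2:ℝ) ^ k - 1) / (1 - p) * ((1 - p) * (p ^ (2 * k) / p ^ C.card)) := by
          field_simp
      _ ≤ ((2:ℝ) ^ k - 1) / (1 - p) * (p ^ D.card - p ^ (2 * k)) := by
          apply mul_le_mul_of_nonneg_left hkey (by positivity)

lemma tH_eq (A : Finset V) : tH H G A = (Nat.card (H ≃g H) : ℝ)⁻¹ *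
    ∑ s : Fin k ↪ V, (if A ⊆ Finset.univ.map s then MH H G s else 0) := by
  rw [tH]
  congr 1
  rw [Finset.sum_filter]

lemma pair_ineq {p : ℝ} (hp0 : 0 < p) (hp1 : p < 1) (s s' : Fin k ↪ V) :
    ∑ A ∈ Finset.univ.filter (fun A : Finset V => A.Nonempty),
      (p ^ (2 * k) / p ^ A.card) *
        ((if A ⊆ Finset.univ.map s then MH H G s else 0) *
         (if A ⊆ Finset.univ.map s' then MH H G s' else 0))
    ≤ ((2:ℝ) ^ k - 1) / (1 - p) * (MH H G s * MH H G s' *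
        (p ^ (Finset.univ.map s ∪ Finset.univ.map s').card - p ^ (2 * k))) := by
  classical
  set C := Finset.univ.map s ∩ Finset.univ.map s' with hC
  have hmm : 0 ≤ MH H G s * MH H G s' := mul_nonneg (MH_nonneg H G s) (MH_nonneg H G s')
  have h1 : ∀ A : Finset V,
      (p ^ (2 * k) / p ^ A.card) * ((if A ⊆ Finset.univ.map s then MH H G s else 0) *
        (if A ⊆ Finset.univ.map s' then MH H G s' else 0))
      = if A ⊆ C then (p ^ (2 * k) / p ^ A.card) * (MH H G s * MH H G s') else 0 := by
    intro A
    by_cases hA : A ⊆ Finset.univ.map s <;> by_cases hA' : A ⊆ Finset.univ.map s' <;>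
      simp [hA, hA', hC, Finset.subset_inter_iff]
  rw [Finset.sum_congr rfl fun A _ => h1 A, ← Finset.sum_filter]
  have h2 : (Finset.univ.filter (fun A : Finset V => A.Nonempty)).filter (fun A => A ⊆ C)
      = C.powerset.filter (fun A => A.Nonempty) := by
    ext A
    simp [Finset.mem_powerset, and_comm]
  rw [h2, ← Finset.sum_mul]
  have hCk : C.card ≤ k := by
    calc C.card ≤ (Finset.univ.map s).card := Finset.card_le_card Finset.inter_subset_left
    _ = k := card_sbar s
  have hD : (Finset.univ.map s ∪ Finset.univ.map s').card + C.card = 2 * k := by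
    rw [hC, Finset.card_union_add_card_inter, card_sbar, card_sbar]
    ring
  have hcore := core_pair (k := k) hp0 hp1 C (Finset.univ.map s ∪ Finset.univ.map s') hCk hD
  calc (∑ A ∈ C.powerset.filter (fun A => A.Nonempty), p ^ (2 * k) / p ^ A.card)
        * (MH H G s * MH H G s')
      ≤ (((2:ℝ) ^ k - 1) / (1 - p) *
          (p ^ (Finset.univ.map s ∪ Finset.univ.map s').card - p ^ (2 * k)))
        * (MH H G s * MH H G s') := mul_le_mul_of_nonneg_right hcore hmm
    _ = ((2:ℝ) ^ k - 1) / (1 - p) * (MH H G s * MH H G s' *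
          (p ^ (Finset.univ.map s ∪ Finset.univ.map s').card - p ^ (2 * k))) := by ring

lemma stepD {p : ℝ} (hp0 : 0 < p) (hp1 : p < 1) :
    ∑ A ∈ Finset.univ.filter (fun A : Finset V => A.Nonempty),
      (p ^ (2 * k) / p ^ A.card) * tH H G A ^ 2
      ≤ ((2:ℝ) ^ k - 1) / (1 - p) * varT H G p := by
  classical
  set c : ℝ := (Nat.card (H ≃g H) : ℝ)⁻¹ with hc
  have hL : ∀ A : Finset V, (p ^ (2 * k) / p ^ A.card) * tH H G A ^ 2
      = c ^ 2 * ∑ s : Fin k ↪ V, ∑ s' : Fin k ↪ V,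
          (p ^ (2 * k) / p ^ A.card) *
            ((if A ⊆ Finset.univ.map s then MH H G s else 0) *
             (if A ⊆ Finset.univ.map s' then MH H G s' else 0)) := by
    intro A
    rw [tH_eq, ← hc, mul_pow, pow_two (∑ s : Fin k ↪ V,
      (if A ⊆ Finset.univ.map s then MH H G s else 0)), Finset.sum_mul_sum]
    simp only [Finset.mul_sum]
    exact Finset.sum_congr rfl fun s _ => Finset.sum_congr rfl fun s' _ => by ring
  rw [Finset.sum_congr rfl fun A _ => hL A, ← Finset.mul_sum, varT_eq, ← hc]
  have hswap : (∑ A ∈ Finset.univ.filter (fun A : Finset V => A.Nonempty),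
      ∑ s : Fin k ↪ V, ∑ s' : Fin k ↪ V,
        (p ^ (2 * k) / p ^ A.card) *
          ((if A ⊆ Finset.univ.map s then MH H G s else 0) *
           (if A ⊆ Finset.univ.map s' then MH H G s' else 0)))
      = ∑ s : Fin k ↪ V, ∑ s' : Fin k ↪ V,
          ∑ A ∈ Finset.univ.filter (fun A : Finset V => A.Nonempty),
            (p ^ (2 * k) / p ^ A.card) *
              ((if A ⊆ Finset.univ.map s then MH H G s else 0) *
               (if A ⊆ Finset.univ.map s' then MH H G s' else 0)) := by
    rw [Finset.sum_comm]
    exact Finset.sum_congr rfl fun s _ => Finset.sum_comm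
  rw [hswap]
  have hre : ((2:ℝ) ^ k - 1) / (1 - p) * (c ^ 2 * ∑ s : Fin k ↪ V, ∑ s' : Fin k ↪ V,
      MH H G s * MH H G s' *
        (p ^ (Finset.univ.map s ∪ Finset.univ.map s').card - p ^ (2 * k)))
      = c ^ 2 * ∑ s : Fin k ↪ V, ∑ s' : Fin k ↪ V,
          ((2:ℝ) ^ k - 1) / (1 - p) * (MH H G s * MH H G s' *
            (p ^ (Finset.univ.map s ∪ Finset.univ.map s').card - p ^ (2 * k))) := by
    simp only [Finset.mul_sum]
    exact Finset.sum_congr rfl fun s _ => Finset.sum_congr rfl fun s' _ => by ring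
  rw [hre]
  refine mul_le_mul_of_nonneg_left ?_ (sq_nonneg c)
  exact Finset.sum_le_sum fun s _ => Finset.sum_le_sum fun s' _ => pair_ineq H G hp0 hp1 s s'

end Helpers

/-- `P(T(H,G) ≠ T°_M(H,G)) ≤ (2^{|V(H)|}-1)/(M(1-p))`. -/
theorem stmt14 {k : ℕ} {V : Type*} [Fintype V] [DecidableEq V]
    (H : SimpleGraph (Fin k)) [DecidableRel H.Adj] (hconn : H.Connected)
    (G : SimpleGraph V) [DecidableRel G.Adj]
    (M p : ℝ) (hM : 0 < M) (hp0 : 0 < p) (hp1 : p < 1) :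
    (∑ ω : V → Bool, wt p ω * (if TH H G ω ≠ Tcirc H G M p ω then 1 else 0)) ≤
      ((2 : ℝ) ^ k - 1) / (M * (1 - p)) := by
  classical
  set Bad : Finset (Finset V) := Finset.univ.filter (fun A : Finset V =>
    A.Nonempty ∧ M * (p ^ (2 * A.card) / p ^ (2 * k)) * varT H G p < tH H G A ^ 2) with hBad
  have h1p : (0:ℝ) < 1 - p := by linarith
  have hwt : ∀ ω : V → Bool, 0 ≤ wt p ω := wt_nonneg hp0.le hp1.le
  have hin : ∀ (A : Finset V) (ω : V → Bool),
      0 ≤ ∏ u ∈ A, (if ω u then (1:ℝ) else 0) :=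
    fun A ω => Finset.prod_nonneg fun u _ => by split_ifs <;> norm_num
  have hpoint : ∀ ω : V → Bool, (if TH H G ω ≠ Tcirc H G M p ω then (1:ℝ) else 0)
      ≤ ∑ A ∈ Bad, ∏ u ∈ A, (if ω u then (1:ℝ) else 0) := by
    intro ω
    split_ifs with h
    · have hsum : ∑ s ∈ Finset.univ.filter (fun s : Fin k ↪ V => ¬ CMev H G M p s),
          MH H G s * Xs s ω ≠ 0 := by
        intro h0
        apply h
        rw [TH, Tcirc]
        congr 1
        rw [← Finset.sum_filter_add_sum_filter_not Finset.univ
          (fun s : Fin k ↪ V => CMev H G M p s) (fun s => MH H G s * Xs s ω), h0, add_zero]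
      obtain ⟨s, hsmem, hsne⟩ := Finset.exists_ne_zero_of_sum_ne_zero hsum
      have hnc : ¬ CMev H G M p s := (Finset.mem_filter.mp hsmem).2
      have hX : Xs s ω ≠ 0 := right_ne_zero_of_mul hsne
      have hω : ∀ u ∈ Finset.univ.map s, ω u = true := by
        by_contra hcon
        exact hX (by rw [Xs_eq, if_neg hcon])
      rw [CMev] at hnc
      push_neg at hnc
      obtain ⟨A, hAsub, hAne, hlt⟩ := hnc
      have hAbad : A ∈ Bad := by
        rw [hBad, Finset.mem_filter]
        exact ⟨Finset.mem_univ A, hAne, hlt⟩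
      have hprod : (∏ u ∈ A, (if ω u then (1:ℝ) else 0)) = 1 :=
        Finset.prod_eq_one fun u hu => by rw [if_pos (hω u (hAsub hu))]
      calc (1:ℝ) = ∏ u ∈ A, (if ω u then (1:ℝ) else 0) := hprod.symm
        _ ≤ ∑ A' ∈ Bad, ∏ u ∈ A', (if ω u then (1:ℝ) else 0) :=
          Finset.single_le_sum (fun A' _ => hin A' ω) hAbad
    · exact Finset.sum_nonneg fun A _ => hin A ω
  have hAB : (∑ ω : V → Bool, wt p ω * (if TH H G ω ≠ Tcirc H G M p ω then (1:ℝ) else 0))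
      ≤ ∑ A ∈ Bad, p ^ A.card := by
    calc (∑ ω : V → Bool, wt p ω * (if TH H G ω ≠ Tcirc H G M p ω then (1:ℝ) else 0))
        ≤ ∑ ω : V → Bool, wt p ω * ∑ A ∈ Bad, ∏ u ∈ A, (if ω u then (1:ℝ) else 0) :=
          Finset.sum_le_sum fun ω _ => mul_le_mul_of_nonneg_left (hpoint ω) (hwt ω)
      _ = ∑ A ∈ Bad, ∑ ω : V → Bool, wt p ω * ∏ u ∈ A, (if ω u then (1:ℝ) else 0) := by
          simp only [Finset.mul_sum]
          exact Finset.sum_comm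
      _ = ∑ A ∈ Bad, p ^ A.card := Finset.sum_congr rfl fun A _ => sum_wt_prod p A
  refine hAB.trans ?_
  have h2k1 : (0:ℝ) ≤ (2:ℝ) ^ k - 1 := by
    have : (1:ℝ) ≤ 2 ^ k := one_le_pow₀ one_le_two
    linarith
  have hvar0 : 0 ≤ varT H G p := varT_nonneg H G hp0.le hp1.le
  rcases eq_or_lt_of_le hvar0 with hv | hv
  · have hBadempty : Bad = ∅ := by
      rw [hBad, Finset.filter_eq_empty_iff]
      intro A _
      rintro ⟨hAne, hAlt⟩
      rw [← hv, mul_zero] at hAlt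
      have hD := stepD H G hp0 hp1
      rw [← hv, mul_zero] at hD
      have hsum0 : ∑ A' ∈ Finset.univ.filter (fun A : Finset V => A.Nonempty),
          (p ^ (2 * k) / p ^ A'.card) * tH H G A' ^ 2 = 0 :=
        le_antisymm hD (Finset.sum_nonneg fun A' _ => mul_nonneg (by positivity) (sq_nonneg _))
      have hA0 := (Finset.sum_eq_zero_iff_of_nonneg
        (fun A' _ => mul_nonneg (by positivity) (sq_nonneg _))).mp hsum0 A
        (Finset.mem_filter.mpr ⟨Finset.mem_univ A, hAne⟩)
      have hq : (0:ℝ) < p ^ (2 * k) / p ^ A.card := by positivity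
      nlinarith
    rw [hBadempty]
    simp only [Finset.sum_empty]
    positivity
  · have hMv : (0:ℝ) < M * varT H G p := mul_pos hM hv
    have hstep : ∀ A ∈ Bad, p ^ A.card
        ≤ (p ^ (2 * k) / p ^ A.card) * tH H G A ^ 2 / (M * varT H G p) := by
      intro A hA
      obtain ⟨-, hAne, hAlt⟩ := Finset.mem_filter.mp hA
      rw [le_div_iff₀ hMv]
      have hq : (p ^ (2 * k) / p ^ A.card) * (M * (p ^ (2 * A.card) / p ^ (2 * k))
          * varT H G p) = p ^ A.card * (M * varT H G p) := by
        have h1 : p ^ (2 * A.card) = p ^ A.card * p ^ A.card := by rw [two_mul, pow_add]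
        have h2 : p ^ A.card ≠ 0 := (pow_pos hp0 _).ne'
        have h3 : p ^ (2 * k) ≠ 0 := (pow_pos hp0 _).ne'
        field_simp
        ring
      calc p ^ A.card * (M * varT H G p)
          = (p ^ (2 * k) / p ^ A.card) * (M * (p ^ (2 * A.card) / p ^ (2 * k))
              * varT H G p) := hq.symm
        _ ≤ (p ^ (2 * k) / p ^ A.card) * tH H G A ^ 2 :=
            mul_le_mul_of_nonneg_left hAlt.le (by positivity)
    calc ∑ A ∈ Bad, p ^ A.card
        ≤ ∑ A ∈ Bad, (p ^ (2 * k) / p ^ A.card) * tH H G A ^ 2 / (M * varT H G p) :=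
          Finset.sum_le_sum hstep
      _ = (∑ A ∈ Bad, (p ^ (2 * k) / p ^ A.card) * tH H G A ^ 2) / (M * varT H G p) :=
          (Finset.sum_div _ _ _).symm
      _ ≤ (∑ A ∈ Finset.univ.filter (fun A : Finset V => A.Nonempty),
            (p ^ (2 * k) / p ^ A.card) * tH H G A ^ 2) / (M * varT H G p) := by
          refine (div_le_div_iff_of_pos_right hMv).mpr ?_
          refine Finset.sum_le_sum_of_subset_of_nonneg ?_
            (fun A _ _ => mul_nonneg (by positivity) (sq_nonneg _))
          intro A hA
          exact Finset.mem_filter.mpr ⟨Finset.mem_univ A, ((Finset.mem_filter.mp hA).2).1⟩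
      _ ≤ (((2:ℝ) ^ k - 1) / (1 - p) * varT H G p) / (M * varT H G p) :=
          (div_le_div_iff_of_pos_right hMv).mpr (stepD H G hp0 hp1)
      _ = ((2:ℝ) ^ k - 1) / (M * (1 - p)) := by
          rw [div_eq_div_iff (by positivity) (by positivity)]
          field_simp
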